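/- Let f : M → N be a smooth map between smooth manifolds with boundary such that the differential mfderiv f at every point p ∈ M is surjective (i.e., f is a submersion). Then f maps the interior of M into the interior of N, i.e., f(interior M) ⊆ interior N. -/

import Mathlib

/-!
Since `p` is an interior point, the coordinate representative of `f` is `C¹` on a whole
neighbourhood of the coordinate of `p`, with surjective derivative there, so by the surjective form
of the inverse function theorem it maps neighbourhoods onto neighbourhoods. As the
representative takes values in the range of the model of `N`, that range is a neighbourhood of the
coordinate of `f p`, i.e. `f p` is an interior point.
-/

open Set Filter Topology

theorem HasStrictFDerivAt.mem_interior_of_eventually_mem {𝕜 : Type*} [NontriviallyNormedField 𝕜]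
    {E : Type*} [NormedAddCommGroup E] [NormedSpace 𝕜 E] [CompleteSpace E]
    {F : Type*} [NormedAddCommGroup F] [NormedSpace 𝕜 F] [CompleteSpace F]
    {f : E → F} {f' : E →L[𝕜] F} {a : E} {s : Set F} (hf : HasStrictFDerivAt f f' a)
    (hf' : Function.Surjective f') (hs : ∀ᶠ x in 𝓝 a, f x ∈ s) : f a ∈ interior s := by
  rw [mem_interior_iff_mem_nhds, ← hf.map_nhds_eq_of_surj (LinearMap.range_eq_top.2 hf')]
  exact hs

section

variable {𝕜 : Type*} [RCLike 𝕜]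
  {E : Type*} [NormedAddCommGroup E] [NormedSpace 𝕜 E]
  {H : Type*} [TopologicalSpace H] {I : ModelWithCorners 𝕜 E H}
  {E' : Type*} [NormedAddCommGroup E'] [NormedSpace 𝕜 E']
  {H' : Type*} [TopologicalSpace H'] {J : ModelWithCorners 𝕜 E' H'}
  {M : Type*} [TopologicalSpace M] [ChartedSpace H M]
  {N : Type*} [TopologicalSpace N] [ChartedSpace H' N]
  {f : M → N} {p : M} {n : WithTop ℕ∞}

theorem ContMDiffAt.hasStrictFDerivAt_writtenInExtChartAt (hf : ContMDiffAt I J n f p)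
    (hn : n ≠ 0) (hp : p ∈ I.interior M) :
    HasStrictFDerivAt (writtenInExtChartAt I J p f) (mfderiv I J f p) (extChartAt I p p) := by
  have hp_nhds : range I ∈ 𝓝 (extChartAt I p p) := mem_interior_iff_mem_nhds.1 hp
  have hcont : ContDiffAt 𝕜 n (writtenInExtChartAt I J p f) (extChartAt I p p) :=
    (contMDiffAt_iff.1 hf).2.contDiffAt hp_nhds
  have hstrict := hcont.hasStrictFDerivAt hn
  have hmfderiv : HasMFDerivAt I J f p
      (fderiv 𝕜 (writtenInExtChartAt I J p f) (extChartAt I p p) : E →L[𝕜] E') :=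
    ⟨hf.continuousAt, hstrict.hasFDerivAt.hasFDerivWithinAt⟩
  rwa [hmfderiv.mfderiv]

theorem ContMDiffAt.mem_interior_of_surjective_mfderiv [CompleteSpace E] [CompleteSpace E']
    (hf : ContMDiffAt I J n f p) (hn : n ≠ 0) (hsurj : Function.Surjective (mfderiv I J f p))
    (hp : p ∈ I.interior M) : f p ∈ J.interior N := by
  have h := (hf.hasStrictFDerivAt_writtenInExtChartAt hn hp).mem_interior_of_eventually_mem hsurj
    (s := range J) (Eventually.of_forall fun _ ↦ mem_range_self _)
  simp only [writtenInExtChartAt, Function.comp_apply, extChartAt_to_inv] at h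
  exact h

end

theorem submersion_image_interior_subset_interior_general
    {E : Type*} [NormedAddCommGroup E] [NormedSpace ℝ E] [FiniteDimensional ℝ E]
    {H : Type*} [TopologicalSpace H] (I : ModelWithCorners ℝ E H)
    {E' : Type*} [NormedAddCommGroup E'] [NormedSpace ℝ E'] [FiniteDimensional ℝ E']
    {H' : Type*} [TopologicalSpace H'] (J : ModelWithCorners ℝ E' H')
    (M : Type*) [TopologicalSpace M] [ChartedSpace H M]
    (N : Type*) [TopologicalSpace N] [ChartedSpace H' N]
    (f : M → N) (hf : ContMDiff I J (⊤ : ℕ∞) f)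
    (hsub : ∀ p : M, Function.Surjective (mfderiv I J f p)) :
    f '' (I.interior M) ⊆ J.interior N := by
  rintro _ ⟨p, hp, rfl⟩
  exact (hf p).mem_interior_of_surjective_mfderiv (by simp) (hsub p) hp

/-- A submersion between smooth manifolds with boundary maps interior points to
interior points: `f '' (interior M) ⊆ interior N`. -/
theorem submersion_image_interior_subset_interior
    {E : Type*} [NormedAddCommGroup E] [NormedSpace ℝ E] [FiniteDimensional ℝ E]
    {H : Type*} [TopologicalSpace H] (I : ModelWithCorners ℝ E H)
    {E' : Type*} [NormedAddCommGroup E'] [NormedSpace ℝ E'] [FiniteDimensional ℝ E']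
    {H' : Type*} [TopologicalSpace H'] (J : ModelWithCorners ℝ E' H')
    (M : Type*) [TopologicalSpace M] [ChartedSpace H M] [IsManifold I (⊤ : ℕ∞) M]
    [T2Space M] [SecondCountableTopology M]
    (N : Type*) [TopologicalSpace N] [ChartedSpace H' N] [IsManifold J (⊤ : ℕ∞) N]
    [T2Space N] [SecondCountableTopology N]
    (f : M → N) (hf : ContMDiff I J (⊤ : ℕ∞) f)
    (hsub : ∀ p : M, Function.Surjective (mfderiv I J f p)) :
    f '' (I.interior M) ⊆ J.interior N :=
  submersion_image_interior_subset_interior_general I J M N f hf hsub
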